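/- Let $K \subset \mathbb{R}^2$ be a compact convex body whose support function $h(\vartheta) = \sup_{y \in K} \langle (\cos\vartheta, \sin\vartheta), y \rangle$ is twice continuously differentiable with $h(\vartheta) + h''(\vartheta) > 0$ for all $\vartheta$. Fix $\vartheta_0 \in \mathbb{R}$ and let $i(\vartheta) = h(\vartheta) n_\vartheta - \big(\int_{\vartheta_0}^{\vartheta} h(\tau)\,d\tau - h'(\vartheta_0)\big) t_\vartheta$ be the left involute of $\partial K$ starting at $i(\vartheta_0)$. Then for every $y \in K$, the function $\vartheta \mapsto \|i(\vartheta) - y\|$ is nondecreasing on $[\vartheta_0, \infty)$ (the involute has the distancing-from-$K$ property). -/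

import Mathlib

/-!
Along the involute, `i'(ϑ) = φ(ϑ) n_ϑ` with `φ(ϑ) = h'(ϑ) - h'(ϑ₀) + ∫_{ϑ₀}^ϑ h`. Since
`φ' = h + h'' > 0` and `φ(ϑ₀) = 0`, the speed `φ` is nonnegative for `ϑ ≥ ϑ₀`. Hence
`(‖i - y‖²)' = 2 φ ⟪n_ϑ, i(ϑ) - y⟫ = 2 φ (h(ϑ) - ⟪n_ϑ, y⟫)`, and the last factor is nonnegative
because `h` is the support function of `K` and `y ∈ K`.
-/

open Real MeasureTheory

noncomputable def vec2 (a b : ℝ) : EuclideanSpace ℝ (Fin 2) :=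
  (WithLp.equiv 2 (Fin 2 → ℝ)).symm ![a, b]

/-- The outer normal direction `n_ϑ = (cos ϑ, sin ϑ)`. -/
noncomputable def nvec (θ : ℝ) : EuclideanSpace ℝ (Fin 2) := vec2 (Real.cos θ) (Real.sin θ)

/-- The tangent direction `t_ϑ = (-sin ϑ, cos ϑ)`. -/
noncomputable def tvec (θ : ℝ) : EuclideanSpace ℝ (Fin 2) := vec2 (-Real.sin θ) (Real.cos θ)

theorem monotoneOn_norm_sub_of_inner_deriv_nonneg {E : Type*} [NormedAddCommGroup E]
    [InnerProductSpace ℝ E] {c c' : ℝ → E} {s : Set ℝ} (hs : Convex ℝ s) (y : E)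
    (hc : ∀ t ∈ s, HasDerivAt c (c' t) t)
    (hnn : ∀ t ∈ interior s, 0 ≤ inner ℝ (c t - y) (c' t)) :
    MonotoneOn (fun t => ‖c t - y‖) s := by
  have hsq : ∀ t ∈ s, HasDerivAt (fun t => ‖c t - y‖ ^ 2) (2 * inner ℝ (c t - y) (c' t)) t :=
    fun t ht => ((hc t ht).sub_const y).norm_sq
  have hmono : MonotoneOn (fun t => ‖c t - y‖ ^ 2) s :=
    monotoneOn_of_hasDerivWithinAt_nonneg hs
      (fun t ht => (hsq t ht).continuousAt.continuousWithinAt)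
      (fun t ht => (hsq t (interior_subset ht)).hasDerivWithinAt)
      (fun t ht => mul_nonneg zero_le_two (hnn t ht))
  intro a ha b hb hab
  exact (pow_le_pow_iff_left₀ (norm_nonneg _) (norm_nonneg _) two_ne_zero).mp (hmono ha hb hab)

theorem vec2_eq_smul_add_smul (a b : ℝ) : vec2 a b = a • vec2 1 0 + b • vec2 0 1 := by
  ext i; fin_cases i <;> simp [vec2]

theorem inner_vec2 (a b c d : ℝ) : inner ℝ (vec2 a b) (vec2 c d) = a * c + b * d := by
  simp [vec2, PiLp.inner_apply, Fin.sum_univ_two]; ring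

theorem neg_vec2 (a b : ℝ) : -vec2 a b = vec2 (-a) (-b) := by
  ext i; fin_cases i <;> simp [vec2]

theorem HasDerivAt.vec2 {f g : ℝ → ℝ} {f' g' x : ℝ} (hf : HasDerivAt f f' x)
    (hg : HasDerivAt g g' x) : HasDerivAt (fun t => vec2 (f t) (g t)) (vec2 f' g') x := by
  simp only [vec2_eq_smul_add_smul (f _), vec2_eq_smul_add_smul f']
  exact (hf.smul_const _).add (hg.smul_const _)

theorem hasDerivAt_nvec (θ : ℝ) : HasDerivAt nvec (tvec θ) θ :=
  (hasDerivAt_cos θ).vec2 (hasDerivAt_sin θ)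

theorem hasDerivAt_tvec (θ : ℝ) : HasDerivAt tvec (-nvec θ) θ := by
  rw [nvec, neg_vec2]
  exact (hasDerivAt_sin θ).fun_neg.vec2 (hasDerivAt_cos θ)

theorem inner_nvec_self (θ : ℝ) : inner ℝ (nvec θ) (nvec θ) = 1 := by
  rw [nvec, inner_vec2, ← sin_sq_add_cos_sq θ]; ring

theorem inner_nvec_tvec (θ : ℝ) : inner ℝ (nvec θ) (tvec θ) = 0 := by
  rw [nvec, tvec, inner_vec2]; ring

theorem inner_nvec_smul_sub_smul_tvec (θ a b : ℝ) :
    inner ℝ (nvec θ) (a • nvec θ - b • tvec θ) = a := by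
  rw [inner_sub_right, real_inner_smul_right, real_inner_smul_right, inner_nvec_self,
    inner_nvec_tvec]; ring

theorem hasDerivAt_involute {h g : ℝ → ℝ} {h' θ : ℝ} (hh : HasDerivAt h h' θ)
    (hg : HasDerivAt g (h θ) θ) :
    HasDerivAt (fun t => h t • nvec t - g t • tvec t) ((h' + g θ) • nvec θ) θ := by
  have hsum : h θ • tvec θ + h' • nvec θ - (g θ • -nvec θ + h θ • tvec θ)
      = (h' + g θ) • nvec θ := by module
  simpa only [hsum] using
    (hh.fun_smul (hasDerivAt_nvec θ)).fun_sub (hg.fun_smul (hasDerivAt_tvec θ))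

theorem deriv_le_deriv_add_integral {h : ℝ → ℝ} (hsm : ContDiff ℝ 2 h)
    (hpos : ∀ θ, 0 ≤ h θ + deriv (deriv h) θ) {θ₀ θ : ℝ} (hθ : θ₀ ≤ θ) :
    deriv h θ₀ ≤ deriv h θ + ∫ τ in θ₀..θ, h τ := by
  have hd : Differentiable ℝ (deriv h) := hsm.differentiable_deriv_two
  have hmono : Monotone fun θ => deriv h θ + ∫ τ in θ₀..θ, h τ :=
    monotone_of_hasDerivAt_nonneg
      (fun θ => (hd θ).hasDerivAt.add (hsm.continuous.integral_hasStrictDerivAt θ₀ θ).hasDerivAt)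
      (fun θ => by rw [add_comm]; exact hpos θ)
  simpa using hmono hθ

theorem stmt_9_general (K : Set (EuclideanSpace ℝ (Fin 2)))
    (h : ℝ → ℝ)
    (hsupp : ∀ θ : ℝ, IsLUB ((fun y => (inner ℝ (nvec θ) y : ℝ)) '' K) (h θ))
    (hsm : ContDiff ℝ 2 h) (hpos : ∀ θ, 0 < h θ + deriv (deriv h) θ)
    (θ₀ : ℝ) (i : ℝ → EuclideanSpace ℝ (Fin 2))
    (hi : ∀ θ, i θ = h θ • nvec θ - ((∫ τ in θ₀..θ, h τ) - deriv h θ₀) • tvec θ) :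
    ∀ y ∈ K, MonotoneOn (fun θ => ‖i θ - y‖) (Set.Ici θ₀) := by
  intro y hy
  set g : ℝ → ℝ := fun θ => (∫ τ in θ₀..θ, h τ) - deriv h θ₀
  have hi' (θ : ℝ) : HasDerivAt i ((deriv h θ + g θ) • nvec θ) θ := by
    rw [show i = fun t => h t • nvec t - g t • tvec t from funext hi]
    exact hasDerivAt_involute ((hsm.differentiable two_ne_zero) θ).hasDerivAt
      ((hsm.continuous.integral_hasStrictDerivAt θ₀ θ).hasDerivAt.sub_const _)
  refine monotoneOn_norm_sub_of_inner_deriv_nonneg (convex_Ici θ₀) y (fun θ _ => hi' θ) ?_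
  intro θ hθ
  rw [interior_Ici] at hθ
  have hspeed : 0 ≤ deriv h θ + g θ := by
    linarith [deriv_le_deriv_add_integral hsm (fun θ => (hpos θ).le) hθ.le]
  have hsupport : 0 ≤ inner ℝ (nvec θ) (i θ - y) := by
    rw [inner_sub_right, hi, inner_nvec_smul_sub_smul_tvec, sub_nonneg]
    exact (hsupp θ).1 ⟨y, hy, rfl⟩
  rw [real_inner_smul_right, real_inner_comm]
  exact mul_nonneg hspeed hsupport

/-- The left involute of `∂K` has the distancing-from-`K` property: for
every `y ∈ K`, the distance `ϑ ↦ ‖i(ϑ) - y‖` is nondecreasing on `[ϑ₀, ∞)`. -/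
theorem stmt_9 (K : Set (EuclideanSpace ℝ (Fin 2)))
    (hne : K.Nonempty) (hcp : IsCompact K) (hcv : Convex ℝ K)
    (h : ℝ → ℝ)
    (hsupp : ∀ θ : ℝ, IsLUB ((fun y => (inner ℝ (nvec θ) y : ℝ)) '' K) (h θ))
    (hsm : ContDiff ℝ 2 h) (hpos : ∀ θ, 0 < h θ + deriv (deriv h) θ)
    (θ₀ : ℝ) (i : ℝ → EuclideanSpace ℝ (Fin 2))
    (hi : ∀ θ, i θ = h θ • nvec θ - ((∫ τ in θ₀..θ, h τ) - deriv h θ₀) • tvec θ) :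
    ∀ y ∈ K, MonotoneOn (fun θ => ‖i θ - y‖) (Set.Ici θ₀) :=
  stmt_9_general K h hsupp hsm hpos θ₀ i hi
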